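/- There exists ε₀ > 0 such that for every 0 < ε < ε₀: u_ε(x₁, 0) = 1/2 > 0, and the connected component Ω_ε of the open set {(x,y) : u_ε(x,y) > 0} containing (x₁, 0) is a nonempty open connected set contained in the open rectangle (−x_ε, x_ε) × (−(1+h), 1+h); in particular Ω_ε is bounded. -/

import Mathlib

open Set Filter Topology

/-- The holomorphic function `F(z) = -∏ (z - xᵢ)`. -/
noncomputable def FF (k : ℕ) (x : Fin (2*k) → ℝ) (z : ℂ) : ℂ :=
  -∏ i, (z - (x i : ℂ))

/-- `v(x,y) = Re F(x + iy)`, a harmonic function. -/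
noncomputable def vv (k : ℕ) (x : Fin (2*k) → ℝ) (p : ℝ × ℝ) : ℝ :=
  (FF k x ((p.1 : ℂ) + (p.2 : ℂ) * Complex.I)).re

/-- The restriction `f` of `F` to the real line. -/
noncomputable def ff (k : ℕ) (x : Fin (2*k) → ℝ) (t : ℝ) : ℝ :=
  (FF k x (t : ℂ)).re

/-- `u_ε(x,y) = 1/2 - y²/2 + ε (y³ - 3 x² y) + ε^{3/2} v(x,y)`. -/
noncomputable def uu (k : ℕ) (x : Fin (2*k) → ℝ) (ε : ℝ) (p : ℝ × ℝ) : ℝ :=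
  1/2 - p.2^2/2 + ε * (p.2^3 - 3*p.1^2*p.2) + ε ^ ((3:ℝ)/2) * vv k x p

/-- `x_ε = (3 ε^{-3/2})^{1/(2k)}`. -/
noncomputable def xeps (k : ℕ) (ε : ℝ) : ℝ :=
  (3 * ε ^ (-(3:ℝ)/2)) ^ ((1:ℝ)/(2*k))

/-- `Ω_ε`: the connected component of `{u_ε > 0}` containing `(x₁, 0)`. -/
noncomputable def Omeg (k : ℕ) (hk : 2 ≤ k) (x : Fin (2*k) → ℝ) (ε : ℝ) : Set (ℝ × ℝ) :=
  connectedComponentIn {p : ℝ × ℝ | 0 < uu k x ε p} (x ⟨0, by omega⟩, 0)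

/-- partial derivative in the first variable. -/
noncomputable def px (g : ℝ × ℝ → ℝ) (p : ℝ × ℝ) : ℝ :=
  deriv (fun t => g (t, p.2)) p.1

/-- partial derivative in the second variable. -/
noncomputable def py (g : ℝ × ℝ → ℝ) (p : ℝ × ℝ) : ℝ :=
  deriv (fun t => g (p.1, t)) p.2

/-- `N_u = u_xx u_y² - 2 u_xy u_x u_y + u_yy u_x²`. -/
noncomputable def NN (g : ℝ × ℝ → ℝ) (p : ℝ × ℝ) : ℝ :=
  px (px g) p * (py g p)^2 - 2 * py (px g) p * px g p * py g p + py (py g) p * (px g p)^2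

/-- Oriented curvature of a level curve of `g`. -/
noncomputable def CurvU (g : ℝ × ℝ → ℝ) (p : ℝ × ℝ) : ℝ :=
  -(NN g p) / ((px g p)^2 + (py g p)^2) ^ ((3:ℝ)/2)

/-!
On the boundary of the rectangle `R_ε = (-x_ε, x_ε) × (-(1+h), 1+h)` the function `u_ε` is negative
for small `ε`, and a connected subset of `{u_ε > 0}` that meets `R_ε` cannot cross `∂R_ε`.
The cubic term is `O(ε x_ε²) = O(ε^(1 - 3/(2k)))`, which tends to `0` because `k ≥ 2`.
On the horizontal sides `1/2 - y²/2 ≤ -h` dominates: there `ε^(3/2) v` is `≤ 0` for large `|x|`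
(the product `∏ (z - xᵢ)` has positive real part) and `O(ε^(3/2))` for bounded `|x|`.
On the vertical sides `v ≤ -x_ε^(2k)/3`, and `x_ε` is chosen so that `ε^(3/2) x_ε^(2k) = 3`,
hence `ε^(3/2) v ≤ -1` beats `1/2`.
-/

theorem norm_prod_add_sub_prod_le {ι R : Type*} [NormedCommRing R] [NormOneClass R]
    (s : Finset ι) (a b : ι → R) :
    ‖∏ i ∈ s, (a i + b i) - ∏ i ∈ s, a i‖ ≤ ∏ i ∈ s, (‖a i‖ + ‖b i‖) - ∏ i ∈ s, ‖a i‖ := by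
  induction s using Finset.cons_induction with
  | empty => simp
  | cons j s hj ih =>
    simp only [Finset.prod_cons]
    calc ‖(a j + b j) * ∏ i ∈ s, (a i + b i) - a j * ∏ i ∈ s, a i‖
        = ‖(a j + b j) * (∏ i ∈ s, (a i + b i) - ∏ i ∈ s, a i) + b j * ∏ i ∈ s, a i‖ := by
          ring_nf
      _ ≤ (‖a j‖ + ‖b j‖) * (∏ i ∈ s, (‖a i‖ + ‖b i‖) - ∏ i ∈ s, ‖a i‖)
            + ‖b j‖ * ∏ i ∈ s, ‖a i‖ := by
          refine (norm_add_le _ _).trans (add_le_add ?_ ?_) <;>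
            refine (norm_mul_le _ _).trans (mul_le_mul ?_ ?_ (norm_nonneg _) (by positivity))
          exacts [norm_add_le _ _, ih, le_rfl, Finset.norm_prod_le _ _]
      _ = _ := by ring

theorem one_add_pow_le_four_thirds {w : ℝ} {n : ℕ} (hw : 0 ≤ w) (hnw : n * w ≤ 1 / 4) :
    (1 + w) ^ n ≤ 4 / 3 :=
  calc (1 + w) ^ n ≤ Real.exp w ^ n := by gcongr; linarith [Real.add_one_le_exp w]
    _ = Real.exp (n * w) := (Real.exp_nat_mul w n).symm
    _ ≤ Real.exp (1 / 4) := Real.exp_le_exp.2 hnw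
    _ ≤ 1 / (1 - 1 / 4) := Real.exp_bound_div_one_sub_of_interval (by norm_num) (by norm_num)
    _ = 4 / 3 := by norm_num

theorem two_thirds_mul_prod_re_le_re_prod {ι : Type*} (s : Finset ι) (z : ι → ℂ) {w : ℝ}
    (hw : 0 ≤ w) (hsw : s.card * w ≤ 1 / 4) (hre : ∀ i ∈ s, 0 ≤ (z i).re)
    (him : ∀ i ∈ s, |(z i).im| ≤ w * (z i).re) :
    2 / 3 * ∏ i ∈ s, (z i).re ≤ (∏ i ∈ s, z i).re := by
  set P := ∏ i ∈ s, (z i).re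
  have hdev : ‖∏ i ∈ s, z i - ∏ i ∈ s, ((z i).re : ℂ)‖ ≤ ((1 + w) ^ s.card - 1) * P := by
    have key :=
      norm_prod_add_sub_prod_le s (fun i => ((z i).re : ℂ)) (fun i => (z i).im * Complex.I)
    simp only [Complex.re_add_im, Complex.norm_real, Real.norm_eq_abs, norm_mul, Complex.norm_I,
      mul_one, Finset.prod_congr rfl fun i hi => abs_of_nonneg (hre i hi)] at key
    refine key.trans ?_
    rw [sub_mul, one_mul, ← Finset.prod_const, ← Finset.prod_mul_distrib]
    gcongr with i hi
    rw [abs_of_nonneg (hre i hi)]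
    linarith [him i hi]
  have hre_dev := (abs_le.1 ((Complex.abs_re_le_norm _).trans hdev)).1
  rw [Complex.sub_re, ← Complex.ofReal_prod, Complex.ofReal_re] at hre_dev
  nlinarith [one_add_pow_le_four_thirds hw hsw, Finset.prod_nonneg hre]

theorem pow_div_two_le_sub_pow {a M : ℝ} {n : ℕ} (ha : 0 < a) (hM : M ≤ 2 * a)
    (hnM : 2 * n * M ≤ a) : a ^ n / 2 ≤ (a - M) ^ n := by
  have hbern :=
    one_add_mul_le_pow (a := -(M / a)) (by rw [neg_le_neg_iff, div_le_iff₀ ha]; linarith) n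
  have hnMa : n * (M / a) ≤ 1 / 2 := by
    rw [← mul_div_assoc, div_le_iff₀ ha]; linarith
  calc a ^ n / 2 ≤ a ^ n * (1 + n * -(M / a)) := by nlinarith [pow_pos ha n]
    _ ≤ a ^ n * (1 + -(M / a)) ^ n := by gcongr
    _ = (a - M) ^ n := by rw [← mul_pow]; congr 1; field_simp; ring

theorem cubic_le_of_abs_le {X Y a : ℝ} (hX : |X| ≤ a) (hY : |Y| ≤ 2) :
    Y ^ 3 - 3 * X ^ 2 * Y ≤ 8 + 6 * a ^ 2 := by
  have hX2 : X ^ 2 ≤ a ^ 2 := by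
    rw [← sq_abs X]; exact pow_le_pow_left₀ (abs_nonneg X) hX 2
  have hY3 : Y ^ 3 ≤ 8 := by
    calc Y ^ 3 ≤ |Y| ^ 3 := by rw [← abs_pow]; exact le_abs_self _
      _ ≤ 2 ^ 3 := pow_le_pow_left₀ (abs_nonneg Y) hY 3
      _ = 8 := by norm_num
  have hXY : -(X ^ 2 * Y) ≤ 2 * X ^ 2 := by
    nlinarith [neg_abs_le Y, sq_nonneg X]
  nlinarith

theorem connectedComponentIn_subset_of_disjoint_frontier {α : Type*} [TopologicalSpace α]
    {S U : Set α} {p : α} (hU : IsOpen U) (hp : p ∈ U) (hS : Disjoint (frontier U) S) :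
    connectedComponentIn S p ⊆ U := by
  by_cases hpS : p ∈ S
  · refine isPreconnected_connectedComponentIn.subset_of_closure_inter_subset hU
      ⟨p, mem_connectedComponentIn hpS, hp⟩ fun q ⟨hqU, hqC⟩ => ?_
    by_contra hq
    rw [← hU.interior_eq] at hq
    exact hS.notMem_of_mem_left ⟨hqU, hq⟩ (connectedComponentIn_subset S p hqC)
  · rw [connectedComponentIn_eq_empty hpS]
    exact empty_subset U

theorem abs_eq_of_mem_frontier_Ioo_prod_Ioo {a b : ℝ} (ha : 0 < a) (hb : 0 < b) {q : ℝ × ℝ}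
    (hq : q ∈ frontier (Ioo (-a) a ×ˢ Ioo (-b) b)) :
    (|q.1| ≤ a ∧ |q.2| = b) ∨ (|q.1| = a ∧ |q.2| ≤ b) := by
  rw [frontier_prod_eq, closure_Ioo (by linarith), closure_Ioo (by linarith),
    frontier_Ioo (by linarith), frontier_Ioo (by linarith)] at hq
  rcases hq with ⟨hq1, hq2⟩ | ⟨hq1, hq2⟩
  · refine Or.inl ⟨abs_le.2 hq1, ?_⟩
    rcases hq2 with hq2 | hq2 <;> simp_all [abs_of_pos hb]
  · refine Or.inr ⟨?_, abs_le.2 hq2⟩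
    rcases hq1 with hq1 | hq1 <;> simp_all [abs_of_pos ha]

theorem xeps_pow (k : ℕ) {ε : ℝ} (hε : 0 < ε) (n : ℕ) :
    xeps k ε ^ n = (3 * ε ^ (-(3 : ℝ) / 2)) ^ ((n : ℝ) / (2 * k)) := by
  rw [xeps, ← Real.rpow_natCast, ← Real.rpow_mul (by positivity), one_div_mul_eq_div]

theorem rpow_mul_xeps_pow_two_mul {k : ℕ} (hk : k ≠ 0) {ε : ℝ} (hε : 0 < ε) :
    ε ^ ((3 : ℝ) / 2) * xeps k ε ^ (2 * k) = 3 := by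
  rw [xeps_pow k hε, Nat.cast_mul, Nat.cast_ofNat, div_self (by positivity), Real.rpow_one,
    mul_left_comm, ← Real.rpow_add hε]
  norm_num

theorem mul_xeps_sq {k : ℕ} (hk : k ≠ 0) {ε : ℝ} (hε : 0 < ε) :
    ε * xeps k ε ^ 2 = 3 ^ ((1 : ℝ) / k) * ε ^ (1 - 3 / (2 * k : ℝ)) := by
  have hexp : -(3 : ℝ) / 2 * ((2 : ℕ) / (2 * k)) = -(3 / (2 * k)) := by
    push_cast
    field_simp
  rw [xeps_pow k hε, Real.mul_rpow (by norm_num) (by positivity), ← Real.rpow_mul hε.le, hexp,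
    Real.rpow_neg hε.le, Real.rpow_sub hε, Real.rpow_one, Nat.cast_ofNat,
    div_mul_cancel_left₀ two_ne_zero, ← one_div]
  ring

theorem tendsto_xeps_nhdsGT_zero {k : ℕ} (hk : k ≠ 0) : Tendsto (xeps k) (𝓝[>] 0) atTop :=
  (tendsto_rpow_atTop (by positivity)).comp
    ((tendsto_rpow_neg_nhdsGT_zero (by norm_num)).const_mul_atTop (by norm_num))

theorem tendsto_mul_xeps_sq_nhdsGT_zero {k : ℕ} (hk : 2 ≤ k) :
    Tendsto (fun ε => ε * xeps k ε ^ 2) (𝓝[>] 0) (𝓝 0) := by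
  have hexp : 0 < 1 - 3 / (2 * k : ℝ) := by
    rw [sub_pos, div_lt_one (by positivity)]
    have : (2 : ℝ) ≤ k := by exact_mod_cast hk
    linarith
  have hlim :
      Tendsto (fun ε : ℝ => 3 ^ ((1 : ℝ) / k) * ε ^ (1 - 3 / (2 * k : ℝ))) (𝓝 0) (𝓝 0) := by
    simpa [Real.zero_rpow hexp.ne'] using
      ((Real.continuousAt_rpow_const 0 _ (Or.inr hexp.le)).const_mul (3 ^ ((1 : ℝ) / k))).tendsto
  refine (hlim.mono_left nhdsWithin_le_nhds).congr' ?_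
  filter_upwards [self_mem_nhdsWithin] with ε hε
  exact (mul_xeps_sq (by omega) hε).symm

theorem tendsto_perturbation_bound_nhdsGT_zero {k : ℕ} (hk : 2 ≤ k) (C : ℝ) :
    Tendsto (fun ε => ε * (8 + 6 * xeps k ε ^ 2) + C * ε ^ ((3 : ℝ) / 2)) (𝓝[>] 0) (𝓝 0) := by
  have hid : Tendsto (fun ε : ℝ => ε) (𝓝[>] 0) (𝓝 0) := nhdsWithin_le_nhds
  have hpow : Tendsto (fun ε : ℝ => ε ^ ((3 : ℝ) / 2)) (𝓝[>] 0) (𝓝 0) := by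
    simpa [Real.zero_rpow] using
      (Real.continuousAt_rpow_const 0 ((3 : ℝ) / 2) (Or.inr (by norm_num))).tendsto.mono_left
        nhdsWithin_le_nhds
  have hsum := ((hid.const_mul 8).add ((tendsto_mul_xeps_sq_nhdsGT_zero hk).const_mul 6)).add
    (hpow.const_mul C)
  simp only [mul_zero, add_zero] at hsum
  exact hsum.congr fun ε => by ring

theorem uu_root_eq {k : ℕ} (x : Fin (2 * k) → ℝ) (ε : ℝ) (i : Fin (2 * k)) :
    uu k x ε (x i, 0) = 1 / 2 := by
  have hF : FF k x (x i) = 0 := by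
    rw [FF, Finset.prod_eq_zero (Finset.mem_univ i) (sub_self _), neg_zero]
  simp [uu, vv, hF]

section Estimates

variable {k : ℕ} {x : Fin (2 * k) → ℝ} {M ε X Y : ℝ}

theorem vv_eq_neg_re_prod :
    vv k x (X, Y) = -(∏ i, ((X : ℂ) + Y * Complex.I - x i)).re := by
  simp [vv, FF]

theorem vv_le_neg_of_le_abs (hk : k ≠ 0) (hM : ∀ i, |x i| ≤ M) (hY : |Y| ≤ 2)
    (hX : M + 16 * k ≤ |X|) : vv k x (X, Y) ≤ -(2 / 3 * (|X| - M) ^ (2 * k)) := by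
  obtain ⟨σ, hσ, hσX⟩ : ∃ σ : ℝ, |σ| = 1 ∧ σ * X = |X| := by
    rcases le_total 0 X with hX0 | hX0
    exacts [⟨1, by norm_num, by rw [abs_of_nonneg hX0, one_mul]⟩,
      ⟨-1, by norm_num, by rw [abs_of_nonpos hX0]; ring⟩]
  -- flipping every factor by `σ = ±1` makes all real parts `≥ |X| - M` without changing the product
  set z : Fin (2 * k) → ℂ := fun i => σ * ((X : ℂ) + Y * Complex.I - x i)
  have hprod : ∏ i, ((X : ℂ) + Y * Complex.I - x i) = ∏ i, z i := by
    rw [Finset.prod_mul_distrib, Finset.prod_const, Finset.card_univ, Fintype.card_fin, pow_mul,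
      ← Complex.ofReal_pow, ← sq_abs, hσ]
    simp
  have hre : ∀ i, |X| - M ≤ (z i).re := fun i => by
    have hzi : (z i).re = σ * X - σ * x i := by simp [z]; ring
    have hσx : σ * x i ≤ M := (le_abs_self _).trans (by rw [abs_mul, hσ, one_mul]; exact hM i)
    linarith
  have him : ∀ i, |(z i).im| = |Y| := fun i => by simp [z, abs_mul, hσ]
  have hk8 : (0 : ℝ) < 8 * k := by positivity
  have key := two_thirds_mul_prod_re_le_re_prod Finset.univ z (w := 1 / (8 * k)) (by positivity)
    (by rw [Finset.card_univ, Fintype.card_fin]; field_simp; push_cast; linarith)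
    (fun i _ => by linarith [hre i]) (fun i _ => by
      rw [him i, div_mul_eq_mul_div, one_mul, le_div_iff₀ hk8]
      nlinarith [hre i])
  have hpow : (|X| - M) ^ (2 * k) ≤ ∏ i, (z i).re := by
    simpa using Finset.prod_le_prod (s := Finset.univ) (fun i _ => by linarith) (fun i _ => hre i)
  rw [vv_eq_neg_re_prod, hprod]
  linarith

theorem vv_le_of_abs_snd_le (hk : k ≠ 0) (hM : ∀ i, |x i| ≤ M) (hY : |Y| ≤ 2) :
    vv k x (X, Y) ≤ (2 * M + 16 * k + 2) ^ (2 * k) := by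
  have hC : 0 ≤ (2 * M + 16 * k + 2) ^ (2 * k) := (even_two_mul k).pow_nonneg _
  rcases le_or_gt (M + 16 * k) |X| with hX | hX
  · refine (vv_le_neg_of_le_abs hk hM hY hX).trans ((neg_nonpos.2 ?_).trans hC)
    exact mul_nonneg (by norm_num) (pow_nonneg (by linarith [k.cast_nonneg (α := ℝ)]) _)
  have hfactor : ∀ i, ‖(X : ℂ) + Y * Complex.I - x i‖ ≤ 2 * M + 16 * k + 2 := fun i => by
    refine (Complex.norm_le_abs_re_add_abs_im _).trans ?_
    have hre : ((X : ℂ) + Y * Complex.I - x i).re = X - x i := by simp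
    have him : ((X : ℂ) + Y * Complex.I - x i).im = Y := by simp
    rw [hre, him]
    linarith [abs_sub X (x i), hM i]
  calc vv k x (X, Y) ≤ ‖∏ i, ((X : ℂ) + Y * Complex.I - x i)‖ := by
        rw [vv_eq_neg_re_prod]
        exact (neg_le_abs _).trans (Complex.abs_re_le_norm _)
    _ = ∏ i, ‖(X : ℂ) + Y * Complex.I - x i‖ := norm_prod _ _
    _ ≤ (2 * M + 16 * k + 2) ^ (2 * k) := by
        simpa using Finset.prod_le_prod (s := Finset.univ) (fun i _ => norm_nonneg _)
          (fun i _ => hfactor i)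

theorem uu_neg_of_abs_fst_eq_xeps (hk : k ≠ 0) (hM : ∀ i, |x i| ≤ M) (hε : 0 < ε)
    (hMa : M + 16 * k ≤ xeps k ε) (hMa' : 4 * k * M ≤ xeps k ε)
    (hsmall : ε * (8 + 6 * xeps k ε ^ 2) < 1 / 2) (hX : |X| = xeps k ε) (hY : |Y| ≤ 2) :
    uu k x ε (X, Y) < 0 := by
  set a := xeps k ε
  have ha : 0 < a := by unfold a xeps; positivity
  have hvv : vv k x (X, Y) ≤ -(a ^ (2 * k) / 3) := by
    have hsub : a ^ (2 * k) / 2 ≤ (a - M) ^ (2 * k) :=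
      pow_div_two_le_sub_pow ha (by linarith [k.cast_nonneg (α := ℝ)]) (by push_cast; linarith)
    have := vv_le_neg_of_le_abs hk hM hY (hX ▸ hMa)
    rw [hX] at this
    linarith
  have hpert : ε ^ ((3 : ℝ) / 2) * vv k x (X, Y) ≤ -1 := by
    have h3 := rpow_mul_xeps_pow_two_mul hk hε
    nlinarith [mul_le_mul_of_nonneg_left hvv (Real.rpow_nonneg hε.le ((3 : ℝ) / 2))]
  have hcubic := mul_le_mul_of_nonneg_left (cubic_le_of_abs_le hX.le hY) hε.le
  simp only [uu]
  nlinarith [sq_nonneg Y]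

theorem uu_neg_of_abs_snd_eq (hk : k ≠ 0) (hM : ∀ i, |x i| ≤ M) (hε : 0 < ε) {a h : ℝ}
    (hh : h ≤ 1)
    (hsmall : ε * (8 + 6 * a ^ 2) + (2 * M + 16 * k + 2) ^ (2 * k) * ε ^ ((3 : ℝ) / 2) < h)
    (hX : |X| ≤ a) (hY : |Y| = 1 + h) :
    uu k x ε (X, Y) < 0 := by
  have hY2 : |Y| ≤ 2 := by linarith
  have hYsq : Y ^ 2 = (1 + h) ^ 2 := by rw [← sq_abs, hY]
  have hpert := mul_le_mul_of_nonneg_left (vv_le_of_abs_snd_le (X := X) hk hM hY2)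
    (Real.rpow_nonneg hε.le ((3 : ℝ) / 2))
  have hcubic := mul_le_mul_of_nonneg_left (cubic_le_of_abs_le hX hY2) hε.le
  simp only [uu]
  nlinarith [sq_nonneg h]

end Estimates

theorem Omeg_subset_Ioo_prod_Ioo {k : ℕ} (hk : 2 ≤ k) {x : Fin (2 * k) → ℝ} {M ε h : ℝ}
    (hM : ∀ i, |x i| ≤ M) (hh : h ∈ Ioo 0 1) (hε : 0 < ε)
    (hMa : M + 16 * k ≤ xeps k ε) (hMa' : 4 * k * M ≤ xeps k ε)
    (hsmall : ε * (8 + 6 * xeps k ε ^ 2) + (2 * M + 16 * k + 2) ^ (2 * k) * ε ^ ((3 : ℝ) / 2)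
      < min h (1 / 2)) :
    Omeg k hk x ε ⊆ Ioo (-xeps k ε) (xeps k ε) ×ˢ Ioo (-(1 + h)) (1 + h) := by
  have hk0 : k ≠ 0 := by omega
  have hk0' : (0 : ℝ) < k := by positivity
  have hC : 0 ≤ (2 * M + 16 * k + 2) ^ (2 * k) * ε ^ ((3 : ℝ) / 2) :=
    mul_nonneg ((even_two_mul k).pow_nonneg _) (Real.rpow_nonneg hε.le _)
  have hx0 := abs_le.1 (hM ⟨0, by omega⟩)
  refine connectedComponentIn_subset_of_disjoint_frontier (isOpen_Ioo.prod isOpen_Ioo)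
    ⟨⟨by linarith, by linarith⟩,
      ⟨by linarith [hh.1], by linarith [hh.1]⟩⟩ ?_
  refine Set.disjoint_left.2 fun q hq hqpos => ?_
  have hqneg : uu k x ε (q.1, q.2) < 0 := by
    rcases abs_eq_of_mem_frontier_Ioo_prod_Ioo (by linarith)
      (by linarith [hh.1]) hq with ⟨hX, hY⟩ | ⟨hX, hY⟩
    · exact uu_neg_of_abs_snd_eq hk0 hM hε hh.2.le (by linarith [min_le_left h (1 / 2)]) hX hY
    · exact uu_neg_of_abs_fst_eq_xeps hk0 hM hε hMa hMa' (by linarith [min_le_right h (1 / 2)])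
        hX (by linarith [hh.2])
  exact (lt_asymm hqpos hqneg).elim

theorem stmt4 (k : ℕ) (hk : 2 ≤ k) (x : Fin (2*k) → ℝ)
    (h : ℝ) (hh : h ∈ Set.Ioo (0:ℝ) 1) :
    ∃ ε₀ > (0:ℝ), ∀ ε : ℝ, 0 < ε → ε < ε₀ →
      uu k x ε (x ⟨0, by omega⟩, 0) = 1/2 ∧ (0:ℝ) < 1/2 ∧
      (Omeg k hk x ε).Nonempty ∧
      IsOpen (Omeg k hk x ε) ∧
      IsConnected (Omeg k hk x ε) ∧
      Omeg k hk x ε ⊆ Set.Ioo (-(xeps k ε)) (xeps k ε) ×ˢ Set.Ioo (-(1+h)) (1+h) ∧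
      Bornology.IsBounded (Omeg k hk x ε) := by
  obtain ⟨M, hM⟩ : ∃ M, ∀ i, |x i| ≤ M :=
    ⟨∑ i, |x i|, fun i => Finset.single_le_sum (fun j _ => abs_nonneg (x j)) (Finset.mem_univ i)⟩
  have hxeps := tendsto_xeps_nhdsGT_zero (k := k) (by omega)
  obtain ⟨ε₀, hε₀, hsmall⟩ := mem_nhdsGT_iff_exists_Ioo_subset.1
    ((hxeps.eventually_ge_atTop (M + 16 * k)).and ((hxeps.eventually_ge_atTop (4 * k * M)).and
      ((tendsto_perturbation_bound_nhdsGT_zero hk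
        ((2 * M + 16 * k + 2) ^ (2 * k))).eventually_lt_const (lt_min hh.1 one_half_pos))))
  refine ⟨ε₀, hε₀, fun ε hε hεε₀ => ?_⟩
  obtain ⟨hMa, hMa', herr⟩ := hsmall ⟨hε, hεε₀⟩
  have hroot := uu_root_eq x ε ⟨0, by omega⟩
  have hpos : (x ⟨0, by omega⟩, 0) ∈ {p : ℝ × ℝ | 0 < uu k x ε p} := by
    rw [mem_ofPred_eq, hroot]
    exact one_half_pos
  have hrect := Omeg_subset_Ioo_prod_Ioo hk hM hh hε hMa hMa' herr
  have hopen : IsOpen {p : ℝ × ℝ | 0 < uu k x ε p} :=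
    isOpen_lt continuous_const (by unfold uu vv FF; fun_prop)
  exact ⟨hroot, one_half_pos, ⟨_, mem_connectedComponentIn hpos⟩, hopen.connectedComponentIn,
    isConnected_connectedComponentIn_iff.2 hpos, hrect,
    ((Metric.isBounded_Ioo _ _).prod (Metric.isBounded_Ioo _ _)).subset hrect⟩
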